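/- arXiv:1508.06093 — 3 statements merged into one kernel-verified Lean document; each statement's English description precedes it below -/
import Mathlib

section
/- Let ζ be a nonnegative real random variable with a continuous density f that is symmetric about its mean μ > 0 (i.e., f(μ + t) = f(μ − t) for all t), and let α, ᾱ_B, ᾱ_S satisfy ᾱ_S < α < ᾱ_B. Define F(G) = E[C*(G)] where C*(G) = (α − ᾱ_B)·G + ᾱ_B·ζ when G ≤ ζ and C*(G) = (α − ᾱ_S)·G + ᾱ_S·ζ when G > ζ. Then F is convex, and its (sub)derivative at G = μ equals (2α − ᾱ_S − ᾱ_B)·P(ζ > μ). Consequently: if α = (ᾱ_B + ᾱ_S)/2 then G* = μ minimizes F; if α > (ᾱ_B + ᾱ_S)/2 then every minimizer satisfies G* < μ; and if α < (ᾱ_B + ᾱ_S)/2 then every minimizer satisfies G* > μ. -/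
/-!
Since `C*(G) = (α - ᾱS) G + ᾱS ζ + (ᾱB - ᾱS) (ζ - G)⁺`, we get
`F G = (α - ᾱS) G + ᾱS μ + (ᾱB - ᾱS) E[(ζ - G)⁺]`, and `G ↦ E[(ζ - G)⁺]` has derivative
`-P(ζ > G)`. Hence `F' G = (α - ᾱS) - (ᾱB - ᾱS) P(ζ > G)` is nondecreasing, so `F` is convex, and
symmetry of the density gives `P(ζ > μ) = 1/2`, i.e. `F' μ = α - (ᾱB + ᾱS) / 2`. The position of
the minimisers follows from the tangent-line inequality of a convex function together with
`F' = 0` at an interior minimiser.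
-/

open MeasureTheory Set Filter Topology

section

variable {f : ℝ → ℝ}

theorem hasDerivAt_integral_Ioi (hc : Continuous f) (hi : Integrable f) (y : ℝ) :
    HasDerivAt (fun y => ∫ x in Ioi y, f x) (-f y) y := by
  have hsplit : (fun y => ∫ x in Ioi y, f x) = fun y => (∫ x in y..0, f x) + ∫ x in Ioi 0, f x :=
    funext fun y => eq_add_of_sub_eq
      (intervalIntegral.integral_Ioi_sub_Ioi' hi.integrableOn hi.integrableOn)
  rw [hsplit]
  exact (intervalIntegral.integral_hasDerivAt_left hi.intervalIntegrable
    hc.stronglyMeasurable.stronglyMeasurableAtFilter hc.continuousAt).add_const _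

theorem antitone_integral_Ioi (hf : 0 ≤ f) (hi : Integrable f) :
    Antitone fun y => ∫ x in Ioi y, f x := fun _ _ hab =>
  setIntegral_mono_set hi.integrableOn (Eventually.of_forall hf) (Ioi_subset_Ioi hab).eventuallyLE

theorem setIntegral_Ioi_eq_setIntegral_Iio_of_symm {μ : ℝ} (hsym : ∀ t, f (μ + t) = f (μ - t)) :
    ∫ x in Ioi μ, f x = ∫ x in Iio μ, f x := by
  have hrefl : ∀ x, f (2 * μ - x) = f x := fun x => by
    simpa [two_mul, sub_sub_eq_add_sub, add_sub_assoc] using (hsym (x - μ)).symm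
  have hpre : (fun x => 2 * μ - x) ⁻¹' Iio μ = Ioi μ := by
    ext x; simp only [mem_preimage, mem_Iio, mem_Ioi]; constructor <;> intro <;> linarith
  calc ∫ x in Ioi μ, f x = ∫ x in (fun x => 2 * μ - x) ⁻¹' Iio μ, f (2 * μ - x) := by
        simp_rw [hpre, hrefl]
    _ = ∫ x in Iio μ, f x :=
        (Measure.measurePreserving_sub_left volume (2 * μ)).setIntegral_preimage_emb
          (Homeomorph.subLeft (2 * μ)).measurableEmbedding f _

theorem integral_Ioi_eq_half_of_symm {μ : ℝ} (hi : Integrable f) (hf_prob : ∫ x, f x = 1)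
    (hsym : ∀ t, f (μ + t) = f (μ - t)) : ∫ x in Ioi μ, f x = 1 / 2 := by
  have h := intervalIntegral.integral_Iic_add_Ioi (b := μ) hi.integrableOn hi.integrableOn
  rw [integral_Iic_eq_integral_Iio, ← setIntegral_Ioi_eq_setIntegral_Iio_of_symm hsym,
    hf_prob] at h
  linarith

theorem max_sub_mul_eq_indicator (G x : ℝ) :
    max (x - G) 0 * f x = (Ioi G).indicator (fun x => x * f x - G * f x) x := by
  by_cases hx : G < x
  · rw [indicator_of_mem (show x ∈ Ioi G from hx), max_eq_left (sub_nonneg.2 hx.le), sub_mul]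
  · rw [indicator_of_notMem (show x ∉ Ioi G from hx), max_eq_right (sub_nonpos.2 (not_lt.1 hx)),
      zero_mul]

theorem integrable_max_sub_mul (hi : Integrable f) (hxi : Integrable fun x => x * f x) (G : ℝ) :
    Integrable fun x => max (x - G) 0 * f x := by
  simp_rw [max_sub_mul_eq_indicator]
  exact (hxi.sub (hi.const_mul G)).indicator measurableSet_Ioi

theorem integral_max_sub_mul (hi : Integrable f) (hxi : Integrable fun x => x * f x) (G : ℝ) :
    ∫ x, max (x - G) 0 * f x = (∫ x in Ioi G, x * f x) - G * ∫ x in Ioi G, f x := by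
  simp_rw [max_sub_mul_eq_indicator, integral_indicator measurableSet_Ioi]
  rw [integral_sub hxi.integrableOn (hi.const_mul G).integrableOn, integral_const_mul]

theorem hasDerivAt_integral_max_sub_mul (hc : Continuous f) (hi : Integrable f)
    (hxi : Integrable fun x => x * f x) (G : ℝ) :
    HasDerivAt (fun G => ∫ x, max (x - G) 0 * f x) (-∫ x in Ioi G, f x) G := by
  simp_rw [integral_max_sub_mul hi hxi]
  refine ((hasDerivAt_integral_Ioi (f := fun x => x * f x) (by fun_prop) hxi G).sub
    ((hasDerivAt_id' G).mul (hasDerivAt_integral_Ioi hc hi G))).congr_deriv ?_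
  ring

end

/-- The cost `C*(G)` of committing `G` when the realised demand is `x`. -/
noncomputable def commitmentCost (α αB αS G x : ℝ) : ℝ :=
  if G ≤ x then (α - αB) * G + αB * x else (α - αS) * G + αS * x

theorem commitmentCost_eq (α αB αS G x : ℝ) :
    commitmentCost α αB αS G x = (α - αS) * G + αS * x + (αB - αS) * max (x - G) 0 := by
  unfold commitmentCost
  split_ifs with h
  · rw [max_eq_left (sub_nonneg.2 h)]; ring
  · rw [max_eq_right (by linarith)]; ring

theorem integral_commitmentCost_mul {f : ℝ → ℝ} {μ : ℝ} (α αB αS : ℝ) (hi : Integrable f)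
    (hxi : Integrable fun x => x * f x) (hf_prob : ∫ x, f x = 1) (hmean : ∫ x, x * f x = μ)
    (G : ℝ) :
    ∫ x, commitmentCost α αB αS G x * f x
      = (α - αS) * G + αS * μ + (αB - αS) * ∫ x, max (x - G) 0 * f x := by
  have hlin : Integrable fun x => (α - αS) * (G * f x) + αS * (x * f x) :=
    ((hi.const_mul G).const_mul _).add (hxi.const_mul _)
  simp_rw [commitmentCost_eq, add_mul, mul_assoc]
  rw [integral_add hlin ((integrable_max_sub_mul hi hxi G).const_mul _),
    integral_add ((hi.const_mul G).const_mul _) (hxi.const_mul _), integral_const_mul,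
    integral_const_mul, integral_const_mul, integral_const_mul, hf_prob, hmean, mul_one]

theorem hasDerivAt_integral_commitmentCost_mul {f : ℝ → ℝ} {μ : ℝ} (α αB αS : ℝ)
    (hc : Continuous f) (hi : Integrable f) (hxi : Integrable fun x => x * f x)
    (hf_prob : ∫ x, f x = 1) (hmean : ∫ x, x * f x = μ) (G : ℝ) :
    HasDerivAt (fun G => ∫ x, commitmentCost α αB αS G x * f x)
      ((α - αS) - (αB - αS) * ∫ x in Ioi G, f x) G := by
  simp_rw [integral_commitmentCost_mul α αB αS hi hxi hf_prob hmean]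
  refine ((((hasDerivAt_id' G).const_mul (α - αS)).add_const (αS * μ)).add
    ((hasDerivAt_integral_max_sub_mul hc hi hxi G).const_mul (αB - αS))).congr_deriv ?_
  ring

theorem convexOn_univ_of_hasDerivAt {F F' : ℝ → ℝ} (hd : ∀ x, HasDerivAt F (F' x) x)
    (hmono : Monotone F') : ConvexOn ℝ univ F := by
  refine Monotone.convexOn_univ_of_deriv (fun x => (hd x).differentiableAt) ?_
  rwa [show deriv F = F' from funext fun x => (hd x).deriv]

namespace ConvexOn

variable {F : ℝ → ℝ} {d x : ℝ}

theorem add_mul_sub_le_of_hasDerivAt (hF : ConvexOn ℝ univ F) (hd : HasDerivAt F d x)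
    (y : ℝ) : F x + d * (y - x) ≤ F y := by
  rcases lt_trichotomy x y with h | rfl | h
  · have := hF.le_slope_of_hasDerivAt (mem_univ x) (mem_univ y) h hd
    rw [slope_def_field, le_div_iff₀ (sub_pos.2 h)] at this
    linarith
  · simp
  · have := hF.slope_le_of_hasDerivAt (mem_univ y) (mem_univ x) h hd
    rw [slope_def_field, div_le_iff₀ (sub_pos.2 h)] at this
    linarith

theorem mul_sub_neg_of_isMinOn (hF : ConvexOn ℝ univ F) (hd : HasDerivAt F d x) (hd0 : d ≠ 0)
    {s : Set ℝ} (hs : s ∈ 𝓝 x) {G : ℝ} (hmin : IsMinOn F s G) : d * (G - x) < 0 := by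
  refine lt_of_le_of_ne ?_ fun h => hd0 ?_
  · have := hF.add_mul_sub_le_of_hasDerivAt hd G
    have := isMinOn_iff.1 hmin x (mem_of_mem_nhds hs)
    linarith
  · obtain rfl : G = x := by
      rcases mul_eq_zero.1 h with h | h
      · exact absurd h hd0
      · linarith
    exact (hmin.isLocalMin hs).hasDerivAt_eq_zero hd

end ConvexOn

theorem stmt3_general (α αB αS μ : ℝ) (f : ℝ → ℝ)
    (hf_cont : Continuous f) (hf_nonneg : ∀ x, 0 ≤ f x)
    (hf_int : Integrable f) (hxf_int : Integrable (fun x => x * f x))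
    (hf_prob : ∫ x, f x = 1) (hmean : ∫ x, x * f x = μ) (hμ : 0 < μ)
    (hsym : ∀ t, f (μ + t) = f (μ - t))
    (h1 : αS < α) (h2 : α < αB)
    (F : ℝ → ℝ)
    (hF : ∀ G, F G = ∫ x, (if G ≤ x then (α - αB) * G + αB * x
                            else (α - αS) * G + αS * x) * f x) :
    ConvexOn ℝ (Set.Ici 0) F ∧
    HasDerivAt F ((2 * α - αS - αB) * ∫ x in Set.Ioi μ, f x) μ ∧
    (α = (αB + αS) / 2 → IsMinOn F (Set.Ici 0) μ) ∧
    (α > (αB + αS) / 2 → ∀ G ∈ Set.Ici (0:ℝ), IsMinOn F (Set.Ici 0) G → G < μ) ∧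
    (α < (αB + αS) / 2 → ∀ G ∈ Set.Ici (0:ℝ), IsMinOn F (Set.Ici 0) G → μ < G) := by
  obtain rfl : F = fun G => ∫ x, commitmentCost α αB αS G x * f x := funext hF
  have hd := hasDerivAt_integral_commitmentCost_mul α αB αS hf_cont hf_int hxf_int hf_prob hmean
  have hconv : ConvexOn ℝ univ _ := convexOn_univ_of_hasDerivAt hd fun a b hab => by
    have := antitone_integral_Ioi hf_nonneg hf_int hab
    nlinarith
  have hhalf := integral_Ioi_eq_half_of_symm hf_int hf_prob hsym
  have hdμ : HasDerivAt _ (α - (αB + αS) / 2) μ := (hd μ).congr_deriv (by rw [hhalf]; ring)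
  have hnhds : Ici (0 : ℝ) ∈ 𝓝 μ := Ici_mem_nhds hμ
  refine ⟨hconv.subset (subset_univ _) (convex_Ici 0), hdμ.congr_deriv (by rw [hhalf]; ring),
    fun hα => isMinOn_iff.2 fun y _ => ?_, fun hα G _ hmin => ?_, fun hα G _ hmin => ?_⟩
  · simpa [hα] using hconv.add_mul_sub_le_of_hasDerivAt hdμ y
  · have hpos : 0 < α - (αB + αS) / 2 := sub_pos.2 hα
    exact sub_neg.1 <| neg_of_mul_neg_right
      (hconv.mul_sub_neg_of_isMinOn hdμ hpos.ne' hnhds hmin) hpos.le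
  · have hneg : α - (αB + αS) / 2 < 0 := sub_neg.2 hα
    exact sub_pos.1 <| pos_of_mul_neg_right
      (hconv.mul_sub_neg_of_isMinOn hdμ hneg.ne hnhds hmin) hneg.le

/-- Day-ahead commitment with symmetric demand density: F is convex, its derivative at
the mean μ equals (2α − ᾱS − ᾱB)·P(ζ > μ), and the location of minimizers relative to
μ is determined by the sign of 2α − ᾱB − ᾱS. -/
theorem stmt3 (α αB αS μ : ℝ) (f : ℝ → ℝ)
    (hf_cont : Continuous f) (hf_nonneg : ∀ x, 0 ≤ f x) (hf_neg : ∀ x < (0:ℝ), f x = 0)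
    (hf_int : Integrable f) (hxf_int : Integrable (fun x => x * f x))
    (hf_prob : ∫ x, f x = 1) (hmean : ∫ x, x * f x = μ) (hμ : 0 < μ)
    (hsym : ∀ t, f (μ + t) = f (μ - t))
    (h1 : αS < α) (h2 : α < αB)
    (F : ℝ → ℝ)
    (hF : ∀ G, F G = ∫ x, (if G ≤ x then (α - αB) * G + αB * x
                            else (α - αS) * G + αS * x) * f x) :
    ConvexOn ℝ (Set.Ici 0) F ∧
    HasDerivAt F ((2 * α - αS - αB) * ∫ x in Set.Ioi μ, f x) μ ∧
    (α = (αB + αS) / 2 → IsMinOn F (Set.Ici 0) μ) ∧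
    (α > (αB + αS) / 2 → ∀ G ∈ Set.Ici (0:ℝ), IsMinOn F (Set.Ici 0) G → G < μ) ∧
    (α < (αB + αS) / 2 → ∀ G ∈ Set.Ici (0:ℝ), IsMinOn F (Set.Ici 0) G → μ < G) :=
  stmt3_general α αB αS μ f hf_cont hf_nonneg hf_int hxf_int hf_prob hmean hμ hsym h1 h2 F hF
end

section
/- Consider two base stations with loads D_1, D_2 > 0, capacities D_i^max ≥ D_1 + D_2 for i = 1, 2, active-mode energy P_i(d) = a_i·d + b_i for d > 0, and sleep energy c_i with c_i < b_i. Over feasible load-sharing variables x_1, x_2 ≥ 0 with served loads d_i = D_i − x_i + x_{ī} satisfying 0 ≤ d_i ≤ D_i^max, the minimum of the total energy P_1(d_1) + P_2(d_2) (with P_i(0) = c_i) is min{ a_2·(D_1+D_2) + b_2 + c_1, a_1·(D_1+D_2) + b_1 + c_2 }, attained by offloading all traffic from one BS to the other, i.e., by putting one BS to sleep. In particular, any split with both d_1 > 0 and d_2 > 0 is strictly suboptimal when c_1 < b_1 and c_2 < b_2. -/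
/-- Case I of load sharing: both capacities exceed the total load D1+D2; the minimum
total energy equals the better of the two single-active-BS configurations, and any
split with both BSs active is strictly suboptimal. -/
theorem stmt5 (a1 a2 b1 b2 c1 c2 D1 D2 M1 M2 : ℝ)
    (ha1 : 0 < a1) (ha2 : 0 < a2) (hb1 : 0 < b1) (hb2 : 0 < b2)
    (hc1 : 0 ≤ c1) (hc2 : 0 ≤ c2) (hc1b : c1 < b1) (hc2b : c2 < b2)
    (hD1 : 0 < D1) (hD2 : 0 < D2) (hM1 : D1 + D2 ≤ M1) (hM2 : D1 + D2 ≤ M2)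
    (P1 P2 : ℝ → ℝ)
    (hP1 : ∀ d, P1 d = if 0 < d then a1 * d + b1 else c1)
    (hP2 : ∀ d, P2 d = if 0 < d then a2 * d + b2 else c2) :
    IsLeast {y : ℝ | ∃ x1 x2 : ℝ, 0 ≤ x1 ∧ 0 ≤ x2 ∧
        0 ≤ D1 - x1 + x2 ∧ D1 - x1 + x2 ≤ M1 ∧ 0 ≤ D2 - x2 + x1 ∧ D2 - x2 + x1 ≤ M2 ∧
        y = P1 (D1 - x1 + x2) + P2 (D2 - x2 + x1)}
      (min (a2 * (D1 + D2) + b2 + c1) (a1 * (D1 + D2) + b1 + c2)) ∧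
    (∀ x1 x2 : ℝ, 0 ≤ x1 → 0 ≤ x2 →
        0 ≤ D1 - x1 + x2 → D1 - x1 + x2 ≤ M1 → 0 ≤ D2 - x2 + x1 → D2 - x2 + x1 ≤ M2 →
        0 < D1 - x1 + x2 → 0 < D2 - x2 + x1 →
        min (a2 * (D1 + D2) + b2 + c1) (a1 * (D1 + D2) + b1 + c2) <
          P1 (D1 - x1 + x2) + P2 (D2 - x2 + x1)) := by
  have hS : 0 < D1 + D2 := by linarith
  have key : ∀ d1 d2 : ℝ, 0 < d1 → 0 < d2 → d1 + d2 = D1 + D2 →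
      min (a2 * (D1 + D2) + b2 + c1) (a1 * (D1 + D2) + b1 + c2) <
        (a1 * d1 + b1) + (a2 * d2 + b2) := by
    intro d1 d2 hd1 hd2 hsum
    rcases le_total a1 a2 with h | h
    · have h1 : a1 * d2 ≤ a2 * d2 := mul_le_mul_of_nonneg_right h hd2.le
      calc min (a2 * (D1 + D2) + b2 + c1) (a1 * (D1 + D2) + b1 + c2)
          ≤ a1 * (D1 + D2) + b1 + c2 := min_le_right _ _
        _ < (a1 * d1 + b1) + (a2 * d2 + b2) := by nlinarith
    · have h1 : a2 * d1 ≤ a1 * d1 := mul_le_mul_of_nonneg_right h hd1.le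
      calc min (a2 * (D1 + D2) + b2 + c1) (a1 * (D1 + D2) + b1 + c2)
          ≤ a2 * (D1 + D2) + b2 + c1 := min_le_left _ _
        _ < (a1 * d1 + b1) + (a2 * d2 + b2) := by nlinarith
  have strict : ∀ x1 x2 : ℝ, 0 ≤ x1 → 0 ≤ x2 →
      0 ≤ D1 - x1 + x2 → D1 - x1 + x2 ≤ M1 → 0 ≤ D2 - x2 + x1 → D2 - x2 + x1 ≤ M2 →
      0 < D1 - x1 + x2 → 0 < D2 - x2 + x1 →
      min (a2 * (D1 + D2) + b2 + c1) (a1 * (D1 + D2) + b1 + c2) <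
        P1 (D1 - x1 + x2) + P2 (D2 - x2 + x1) := by
    intro x1 x2 _ _ _ _ _ _ hd1 hd2
    rw [hP1, hP2, if_pos hd1, if_pos hd2]
    exact key _ _ hd1 hd2 (by ring)
  refine ⟨⟨?_, ?_⟩, strict⟩
  · rcases le_total (a2 * (D1 + D2) + b2 + c1) (a1 * (D1 + D2) + b1 + c2) with h | h
    · refine ⟨D1, 0, hD1.le, le_refl 0, by norm_num, by linarith, by linarith, by linarith, ?_⟩
      rw [min_eq_left h, hP1, hP2]
      rw [if_neg (by norm_num), if_pos (by linarith)]
      ring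
    · refine ⟨0, D2, le_refl 0, hD2.le, by linarith, by linarith, by norm_num, by linarith, ?_⟩
      rw [min_eq_right h, hP1, hP2]
      rw [if_pos (by linarith), if_neg (by norm_num)]
      ring
  · rintro y ⟨x1, x2, hx1, hx2, h1, h2, h3, h4, rfl⟩
    rcases h1.lt_or_eq with hd1 | hd1
    · rcases h3.lt_or_eq with hd2 | hd2
      · exact (strict x1 x2 hx1 hx2 h1 h2 h3 h4 hd1 hd2).le
      · rw [hP1, hP2, if_pos hd1, if_neg (by rw [← hd2]; exact lt_irrefl 0)]
        have : D1 - x1 + x2 = D1 + D2 := by linarith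
        rw [this]
        exact min_le_of_right_le (by linarith)
    · rw [hP1, hP2, if_neg (by rw [← hd1]; exact lt_irrefl 0)]
      have hd2 : 0 < D2 - x2 + x1 := by linarith
      rw [if_pos hd2]
      have : D2 - x2 + x1 = D1 + D2 := by linarith
      rw [this]
      exact min_le_of_left_le (by linarith)
end

section
/- In Case I of the load-sharing problem (both capacities exceed D_1 + D_2), suppose a_2(D_1+D_2) + b_2 + c_1 ≤ a_1(D_1+D_2) + b_1 + c_2. Then the offloading x_1 = D_1, x_2 = 0 (BS 1 sleeps, BS 2 serves everything) achieves total energy a_2(D_1+D_2) + b_2 + c_1, and this is a global minimum of P_1(d_1) + P_2(d_2) over all feasible nonnegative offloads x_1 ≤ D_1, x_2 ≤ D_2 with capacity constraints, given c_i < b_i for i = 1, 2. -/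
/-- Case I with a2(D1+D2)+b2+c1 ≤ a1(D1+D2)+b1+c2: offloading x1 = D1, x2 = 0 (BS 1
sleeps, BS 2 serves everything) achieves total energy a2(D1+D2)+b2+c1, a global
minimum over all feasible offloads. -/
theorem stmt15 (a1 a2 b1 b2 c1 c2 D1 D2 M1 M2 : ℝ)
    (ha1 : 0 < a1) (ha2 : 0 < a2)
    (hc1 : 0 ≤ c1) (hc2 : 0 ≤ c2) (hc1b : c1 < b1) (hc2b : c2 < b2)
    (hD1 : 0 < D1) (hD2 : 0 < D2) (hM1 : D1 + D2 ≤ M1) (hM2 : D1 + D2 ≤ M2)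
    (hcase : a2 * (D1 + D2) + b2 + c1 ≤ a1 * (D1 + D2) + b1 + c2)
    (P1 P2 : ℝ → ℝ)
    (hP1 : ∀ d, P1 d = if 0 < d then a1 * d + b1 else c1)
    (hP2 : ∀ d, P2 d = if 0 < d then a2 * d + b2 else c2) :
    P1 (D1 - D1 + 0) + P2 (D2 - 0 + D1) = a2 * (D1 + D2) + b2 + c1 ∧
    (∀ x1 x2 : ℝ, 0 ≤ x1 → x1 ≤ D1 → 0 ≤ x2 → x2 ≤ D2 →
        D1 - x1 + x2 ≤ M1 → D2 - x2 + x1 ≤ M2 →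
        a2 * (D1 + D2) + b2 + c1 ≤ P1 (D1 - x1 + x2) + P2 (D2 - x2 + x1)) := by
  constructor
  · rw [hP1, hP2]
    rw [if_neg (by norm_num), if_pos (by linarith)]
    ring
  · intro x1 x2 h1 h2 h3 h4 _ _
    rw [hP1, hP2]
    set d1 := D1 - x1 + x2 with hd1
    set d2 := D2 - x2 + x1 with hd2
    have hd1n : 0 ≤ d1 := by simp [hd1]; linarith
    have hd2n : 0 ≤ d2 := by simp [hd2]; linarith
    have hsum : d1 + d2 = D1 + D2 := by simp [hd1, hd2]; ring
    by_cases h1p : 0 < d1 <;> by_cases h2p : 0 < d2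
    · rw [if_pos h1p, if_pos h2p]
      rcases le_or_gt a2 a1 with h | h
      · nlinarith [mul_pos h2p ha2]
      · nlinarith [mul_le_mul_of_nonneg_left (show d1 ≤ D1 + D2 by linarith) (le_of_lt (sub_pos.mpr h))]
    · have : d2 = 0 := le_antisymm (not_lt.mp h2p) hd2n
      rw [if_pos h1p, if_neg h2p]
      have : d1 = D1 + D2 := by linarith
      rw [this]; linarith
    · have : d1 = 0 := le_antisymm (not_lt.mp h1p) hd1n
      rw [if_neg h1p, if_pos h2p]
      have : d2 = D1 + D2 := by linarith
      rw [this]; linarith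
    · exfalso; push_neg at h1p h2p; linarith
end
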